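/- Let α ∈ (0,2) and let the sequence {ξ^k} be generated by iterating the parallel splitting ALM step (producing w̃^k and ξ̃^k from input ξ^k) followed by the rank-two relaxation step ξ^{k+1} = ξ^k − αℳ(ξ^k − ξ̃^k). Then for every integer k ≥ 0: ‖ξ^{k+1} − ξ^{k+2}‖²_ℋ ≤ ‖ξ^k − ξ^{k+1}‖²_ℋ; moreover ‖ξ^k − ξ^{k+1}‖²_ℋ − ‖ξ^{k+1} − ξ^{k+2}‖²_ℋ ≥ α(2−α)‖(ξ^k − ξ̃^k) − (ξ^{k+1} − ξ̃^{k+1})‖²_𝒟. -/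

import Mathlib

open Matrix
open scoped Kronecker

noncomputable section

/-- `Q₀ = [β I_p, e_p; −e_pᵀ, 1/β]`. -/
def Q0 (p : ℕ) (β : ℝ) : Matrix (Fin p ⊕ Unit) (Fin p ⊕ Unit) ℝ :=
  Matrix.fromBlocks (β • (1 : Matrix (Fin p) (Fin p) ℝ))
    (Matrix.of fun _ _ => (1 : ℝ))
    (Matrix.of fun _ _ => (-1 : ℝ))
    (Matrix.of fun _ _ => 1 / β)

/-- `D₀ = diag(β, …, β, 1/β)`. -/
def D0 (p : ℕ) (β : ℝ) : Matrix (Fin p ⊕ Unit) (Fin p ⊕ Unit) ℝ :=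
  Matrix.fromBlocks (β • (1 : Matrix (Fin p) (Fin p) ℝ)) 0 0
    (Matrix.of fun _ _ => 1 / β)

/-- `M₀ = I_{p+1} − (1/(p+1))·[e_p e_pᵀ, −(1/β)e_p; β e_pᵀ, p]`. -/
def M0 (p : ℕ) (β : ℝ) : Matrix (Fin p ⊕ Unit) (Fin p ⊕ Unit) ℝ :=
  1 - (1 / (p + 1 : ℝ)) •
    Matrix.fromBlocks (Matrix.of fun _ _ => (1 : ℝ))
      (Matrix.of fun _ _ => -(1 / β))
      (Matrix.of fun _ _ => (β : ℝ))
      (Matrix.of fun _ _ => (p : ℝ))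

/-- `H₀ = [β(I_p + e_p e_pᵀ), 0; 0, (p+1)/β]`. -/
def H0 (p : ℕ) (β : ℝ) : Matrix (Fin p ⊕ Unit) (Fin p ⊕ Unit) ℝ :=
  Matrix.fromBlocks (β • ((1 : Matrix (Fin p) (Fin p) ℝ) + Matrix.of fun _ _ => (1 : ℝ))) 0 0
    (Matrix.of fun _ _ => (p + 1 : ℝ) / β)

/-- `𝒬 = Q₀ ⊗ I_m`. -/
def calQ (p m : ℕ) (β : ℝ) : Matrix ((Fin p ⊕ Unit) × Fin m) ((Fin p ⊕ Unit) × Fin m) ℝ :=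
  Q0 p β ⊗ₖ (1 : Matrix (Fin m) (Fin m) ℝ)

/-- `𝒟 = D₀ ⊗ I_m`. -/
def calD (p m : ℕ) (β : ℝ) : Matrix ((Fin p ⊕ Unit) × Fin m) ((Fin p ⊕ Unit) × Fin m) ℝ :=
  D0 p β ⊗ₖ (1 : Matrix (Fin m) (Fin m) ℝ)

/-- `ℳ = M₀ ⊗ I_m`. -/
def calM (p m : ℕ) (β : ℝ) : Matrix ((Fin p ⊕ Unit) × Fin m) ((Fin p ⊕ Unit) × Fin m) ℝ :=
  M0 p β ⊗ₖ (1 : Matrix (Fin m) (Fin m) ℝ)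

/-- `ℋ = H₀ ⊗ I_m`. -/
def calH (p m : ℕ) (β : ℝ) : Matrix ((Fin p ⊕ Unit) × Fin m) ((Fin p ⊕ Unit) × Fin m) ℝ :=
  H0 p β ⊗ₖ (1 : Matrix (Fin m) (Fin m) ℝ)

/-- `‖v‖²_G = vᵀ G v`. -/
def nsq {p m : ℕ} (G : Matrix ((Fin p ⊕ Unit) × Fin m) ((Fin p ⊕ Unit) × Fin m) ℝ)
    (v : (Fin p ⊕ Unit) × Fin m → ℝ) : ℝ :=
  v ⬝ᵥ G.mulVec v

/-- `θ(x) = Σ_i θ_i(x_i)`. -/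
def thetaSum {p : ℕ} {n : Fin p → ℕ} (θ : (i : Fin p) → (Fin (n i) → ℝ) → ℝ)
    (x : (i : Fin p) → Fin (n i) → ℝ) : ℝ :=
  ∑ i, θ i (x i)

/-- The Euclidean inner product on `ℝ^{n_1}×⋯×ℝ^{n_p}×ℝ^m`. -/
def dotW {p m : ℕ} {n : Fin p → ℕ}
    (w w' : ((i : Fin p) → Fin (n i) → ℝ) × (Fin m → ℝ)) : ℝ :=
  (∑ i, w.1 i ⬝ᵥ w'.1 i) + w.2 ⬝ᵥ w'.2

/-- `F(w) = (−A_1ᵀλ, …, −A_pᵀλ, Σ_i A_i x_i − b)`. -/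
def Fop {p m : ℕ} {n : Fin p → ℕ} (A : (i : Fin p) → Matrix (Fin m) (Fin (n i)) ℝ)
    (b : Fin m → ℝ) (w : ((i : Fin p) → Fin (n i) → ℝ) × (Fin m → ℝ)) :
    ((i : Fin p) → Fin (n i) → ℝ) × (Fin m → ℝ) :=
  (fun i => -((A i)ᵀ.mulVec w.2), (∑ i, (A i).mulVec (w.1 i)) - b)

/-- `Pw = (A_1 x_1, …, A_p x_p, λ) ∈ ℝ^{(p+1)m}`. -/
def Pmap {p m : ℕ} {n : Fin p → ℕ} (A : (i : Fin p) → Matrix (Fin m) (Fin (n i)) ℝ)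
    (w : ((i : Fin p) → Fin (n i) → ℝ) × (Fin m → ℝ)) :
    (Fin p ⊕ Unit) × Fin m → ℝ :=
  fun q => Sum.elim (fun i => (A i).mulVec (w.1 i) q.2) (fun _ => w.2 q.2) q.1

/-- `Ω = 𝒳_1 × ⋯ × 𝒳_p × ℝ^m`. -/
def OmegaSet {p : ℕ} (m : ℕ) {n : Fin p → ℕ} (X : (i : Fin p) → Set (Fin (n i) → ℝ)) :
    Set (((i : Fin p) → Fin (n i) → ℝ) × (Fin m → ℝ)) :=
  {w | ∀ i, w.1 i ∈ X i}

/-- The solution set `Ω*` of the variational inequality VI(Ω,F,θ). -/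
def VIsol {p m : ℕ} {n : Fin p → ℕ} (θ : (i : Fin p) → (Fin (n i) → ℝ) → ℝ)
    (X : (i : Fin p) → Set (Fin (n i) → ℝ))
    (A : (i : Fin p) → Matrix (Fin m) (Fin (n i)) ℝ) (b : Fin m → ℝ) :
    Set (((i : Fin p) → Fin (n i) → ℝ) × (Fin m → ℝ)) :=
  {ws | ws ∈ OmegaSet m X ∧ ∀ w ∈ OmegaSet m X,
    thetaSum θ w.1 - thetaSum θ ws.1 + dotW (w - ws) (Fop A b ws) ≥ 0}

/-- The `λ`-component of `ξ = (u_1, …, u_p, λ)`. -/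
def lamOf {p m : ℕ} (ξ : (Fin p ⊕ Unit) × Fin m → ℝ) : Fin m → ℝ :=
  fun j => ξ (Sum.inr (), j)

/-- The `u_i`-component of `ξ = (u_1, …, u_p, λ)`. -/
def uOf {p m : ℕ} (ξ : (Fin p ⊕ Unit) × Fin m → ℝ) (i : Fin p) : Fin m → ℝ :=
  fun j => ξ (Sum.inl i, j)

/-- The parallel splitting ALM step: with input `ξ = (u_1, …, u_p, λ)` it produces
`w̃ = (x̃_1, …, x̃_p, λ̃)` where each `x̃_i ∈ 𝒳_i` minimizes
`x_i ↦ θ_i(x_i) − λᵀ A_i x_i + (β/2)‖A_i x_i − u_i‖²` over `𝒳_i`, and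
`λ̃ = λ − β(Σ_i u_i − b)`. -/
def ALMStep {p m : ℕ} {n : Fin p → ℕ} (β : ℝ) (θ : (i : Fin p) → (Fin (n i) → ℝ) → ℝ)
    (X : (i : Fin p) → Set (Fin (n i) → ℝ))
    (A : (i : Fin p) → Matrix (Fin m) (Fin (n i)) ℝ) (b : Fin m → ℝ)
    (ξ : (Fin p ⊕ Unit) × Fin m → ℝ)
    (wt : ((i : Fin p) → Fin (n i) → ℝ) × (Fin m → ℝ)) : Prop :=
  (∀ i, wt.1 i ∈ X i ∧ ∀ y ∈ X i,
      θ i (wt.1 i) - lamOf ξ ⬝ᵥ (A i).mulVec (wt.1 i) +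
          β / 2 * (((A i).mulVec (wt.1 i) - uOf ξ i) ⬝ᵥ ((A i).mulVec (wt.1 i) - uOf ξ i)) ≤
        θ i y - lamOf ξ ⬝ᵥ (A i).mulVec y +
          β / 2 * (((A i).mulVec y - uOf ξ i) ⬝ᵥ ((A i).mulVec y - uOf ξ i))) ∧
  wt.2 = lamOf ξ - β • ((∑ i, uOf ξ i) - b)

/-!
Write `a = ξ^k − ξ̃^k` and `c = a − (ξ^{k+1} − ξ̃^{k+1})`. The relaxation step gives
`ξ^k − ξ^{k+1} = αℳa`, `ξ^{k+1} − ξ^{k+2} = αℳ(a − c)` and `ξ̃^k − ξ̃^{k+1} = αℳa − c`.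
Adding the first-order optimality conditions of the subproblems at steps `k` and `k+1`
(monotonicity of the subdifferentials) and substituting the `λ`-update yields
`(ξ̃^k − ξ̃^{k+1})ᵀ𝒬c ≥ 0`. Because `ℋℳ = 𝒬`, `ℳᵀ𝒬 = 𝒟` and `𝒬 + 𝒬ᵀ = 2𝒟`,
`‖αℳa‖²_ℋ − ‖αℳ(a − c)‖²_ℋ = α²(2(ℳa)ᵀ𝒬c − ‖c‖²_𝒟)`, while the inequality above says
`α(ℳa)ᵀ𝒬c ≥ cᵀ𝒬c = ‖c‖²_𝒟`; together they bound the decrease below by `α(2−α)‖c‖²_𝒟 ≥ 0`.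
-/
section Descent

variable {ι : Type*} [Fintype ι]

theorem dotProduct_transpose_mulVec_self (Q : Matrix ι ι ℝ) (c : ι → ℝ) :
    c ⬝ᵥ Qᵀ *ᵥ c = c ⬝ᵥ Q *ᵥ c := by
  rw [Matrix.mulVec_transpose, dotProduct_comm, ← Matrix.dotProduct_mulVec]

theorem relaxation_descent {H M Q D : Matrix ι ι ℝ} (hH : Hᵀ = H) (hHM : H * M = Q)
    (hMQ : Mᵀ * Q = D) (hQD : Q + Qᵀ = (2 : ℝ) • D) {α : ℝ} (hα : 0 < α) (a c : ι → ℝ)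
    (hkey : 0 ≤ (α • M *ᵥ a - c) ⬝ᵥ Q *ᵥ c) :
    α * (2 - α) * (c ⬝ᵥ D *ᵥ c) ≤
      (α • M *ᵥ a) ⬝ᵥ H *ᵥ (α • M *ᵥ a) - (α • M *ᵥ (a - c)) ⬝ᵥ H *ᵥ (α • M *ᵥ (a - c)) := by
  have hQc : c ⬝ᵥ Q *ᵥ c = c ⬝ᵥ D *ᵥ c := by
    have h := congrArg (c ⬝ᵥ · *ᵥ c) hQD
    simp only [Matrix.add_mulVec, dotProduct_add, Matrix.smul_mulVec, dotProduct_smul,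
      dotProduct_transpose_mulVec_self, smul_eq_mul] at h
    linarith
  have hHc : (M *ᵥ c) ⬝ᵥ H *ᵥ (M *ᵥ c) = c ⬝ᵥ D *ᵥ c := by
    rw [Matrix.mulVec_mulVec, hHM, ← Matrix.vecMul_transpose M c, ← Matrix.dotProduct_mulVec,
      Matrix.mulVec_mulVec, hMQ]
  have hHa : (M *ᵥ a) ⬝ᵥ H *ᵥ (M *ᵥ c) = (M *ᵥ a) ⬝ᵥ Q *ᵥ c := by
    rw [Matrix.mulVec_mulVec, hHM]
  have hsymm : (M *ᵥ c) ⬝ᵥ H *ᵥ (M *ᵥ a) = (M *ᵥ a) ⬝ᵥ H *ᵥ (M *ᵥ c) := by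
    rw [Matrix.dotProduct_mulVec, ← Matrix.mulVec_transpose, hH, dotProduct_comm]
  simp only [Matrix.mulVec_sub, Matrix.mulVec_smul, sub_dotProduct, dotProduct_sub,
    smul_dotProduct, dotProduct_smul, smul_eq_mul] at hkey ⊢
  rw [hsymm, hHa, hHc]
  nlinarith [mul_nonneg hα.le hkey]

end Descent

section Blocks

variable {p m : ℕ} {β : ℝ}

theorem H0_mul_M0 (hβ : β ≠ 0) : H0 p β * M0 p β = Q0 p β := by
  have hp1 : (p + 1 : ℝ) ≠ 0 := by positivity
  ext (i | i) (j | j) <;>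
    simp [H0, M0, Q0, Matrix.mul_apply, Fintype.sum_sum_type, Matrix.one_apply,
      Finset.sum_add_distrib, ite_mul, mul_ite, add_mul, mul_sub] <;>
    field_simp <;> ring

theorem M0_transpose_mul_Q0 (hβ : β ≠ 0) : (M0 p β)ᵀ * Q0 p β = D0 p β := by
  have hp1 : (p + 1 : ℝ) ≠ 0 := by positivity
  ext (i | i) (j | j) <;>
    simp [D0, M0, Q0, Matrix.mul_apply, Fintype.sum_sum_type, Matrix.one_apply, ite_mul,
      mul_ite, sub_mul] <;>
    field_simp <;> ring

theorem Q0_add_transpose : Q0 p β + (Q0 p β)ᵀ = (2 : ℝ) • D0 p β := by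
  ext (i | i) (j | j) <;> simp [D0, Q0, Matrix.one_apply, eq_comm] <;> (try split_ifs) <;> ring

theorem H0_transpose : (H0 p β)ᵀ = H0 p β := by
  ext (i | i) (j | j) <;> simp [H0, Matrix.one_apply, eq_comm]

theorem calH_mul_calM (hβ : β ≠ 0) : calH p m β * calM p m β = calQ p m β := by
  rw [calH, calM, calQ, ← Matrix.mul_kronecker_mul, H0_mul_M0 hβ, Matrix.one_mul]

theorem calM_transpose_mul_calQ (hβ : β ≠ 0) : (calM p m β)ᵀ * calQ p m β = calD p m β := by
  rw [calM, calQ, calD, ← Matrix.kroneckerMap_transpose, Matrix.transpose_one,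
    ← Matrix.mul_kronecker_mul, M0_transpose_mul_Q0 hβ, Matrix.one_mul]

theorem calQ_add_transpose : calQ p m β + (calQ p m β)ᵀ = (2 : ℝ) • calD p m β := by
  rw [calQ, calD, ← Matrix.kroneckerMap_transpose, Matrix.transpose_one,
    ← Matrix.add_kronecker, Q0_add_transpose, Matrix.smul_kronecker]

theorem calH_transpose : (calH p m β)ᵀ = calH p m β := by
  rw [calH, ← Matrix.kroneckerMap_transpose, Matrix.transpose_one, H0_transpose]

end Blocks

theorem dotProduct_kronecker_one_mulVec {ι κ R : Type*} [Fintype ι] [Fintype κ]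
    [DecidableEq κ] [CommSemiring R] (K : Matrix ι ι R) (v w : ι × κ → R) :
    v ⬝ᵥ (K ⊗ₖ (1 : Matrix κ κ R)) *ᵥ w =
      ∑ r, ∑ s, K r s * ((fun j => v (r, j)) ⬝ᵥ fun j => w (s, j)) := by
  simp only [dotProduct, mulVec, kroneckerMap_apply, Matrix.one_apply, mul_ite, mul_one, mul_zero,
    ite_mul, zero_mul, Fintype.sum_prod_type, Finset.sum_ite_eq, Finset.mem_univ, ↓reduceIte,
    Finset.mul_sum]
  refine Finset.sum_congr rfl fun r _ => ?_
  rw [Finset.sum_comm]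
  simp only [mul_left_comm]

section Coordinates

variable {p m : ℕ} {β : ℝ}

@[simp] theorem uOf_sub (v w : (Fin p ⊕ Unit) × Fin m → ℝ) (i : Fin p) :
    uOf (v - w) i = uOf v i - uOf w i := rfl

@[simp] theorem lamOf_sub (v w : (Fin p ⊕ Unit) × Fin m → ℝ) :
    lamOf (v - w) = lamOf v - lamOf w := rfl

@[simp] theorem uOf_Pmap {n : Fin p → ℕ} (A : (i : Fin p) → Matrix (Fin m) (Fin (n i)) ℝ)
    (w : ((i : Fin p) → Fin (n i) → ℝ) × (Fin m → ℝ)) (i : Fin p) :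
    uOf (Pmap A w) i = A i *ᵥ w.1 i := rfl

@[simp] theorem lamOf_Pmap {n : Fin p → ℕ} (A : (i : Fin p) → Matrix (Fin m) (Fin (n i)) ℝ)
    (w : ((i : Fin p) → Fin (n i) → ℝ) × (Fin m → ℝ)) :
    lamOf (Pmap A w) = w.2 := rfl

theorem dotProduct_calQ_mulVec (v w : (Fin p ⊕ Unit) × Fin m → ℝ) :
    v ⬝ᵥ calQ p m β *ᵥ w =
      ∑ i, (β * (uOf v i ⬝ᵥ uOf w i) + uOf v i ⬝ᵥ lamOf w - lamOf v ⬝ᵥ uOf w i) +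
        β⁻¹ * (lamOf v ⬝ᵥ lamOf w) := by
  rw [calQ, dotProduct_kronecker_one_mulVec]
  unfold uOf lamOf
  simp only [Q0, one_div, Fintype.sum_sum_type, Finset.univ_unique, PUnit.default_eq_unit,
    Finset.sum_singleton, Finset.sum_add_distrib, fromBlocks_apply₁₁, Matrix.smul_apply,
    Matrix.one_apply, smul_eq_mul, mul_ite, mul_one, mul_zero, ite_mul, zero_mul, Finset.sum_ite_eq,
    Finset.mem_univ, ↓reduceIte, fromBlocks_apply₂₁, of_apply, neg_mul, one_mul,
    Finset.sum_neg_distrib, fromBlocks_apply₁₂, fromBlocks_apply₂₂, Finset.sum_sub_distrib]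
  ring

theorem dotProduct_calD_mulVec (v w : (Fin p ⊕ Unit) × Fin m → ℝ) :
    v ⬝ᵥ calD p m β *ᵥ w = ∑ i, β * (uOf v i ⬝ᵥ uOf w i) + β⁻¹ * (lamOf v ⬝ᵥ lamOf w) := by
  rw [calD, dotProduct_kronecker_one_mulVec]
  unfold uOf lamOf
  simp [D0, Fintype.sum_sum_type, Matrix.one_apply]

theorem nsq_calD_nonneg (hβ : 0 < β) (v : (Fin p ⊕ Unit) × Fin m → ℝ) :
    0 ≤ nsq (calD p m β) v := by
  have hsq (x : Fin m → ℝ) : 0 ≤ x ⬝ᵥ x := Finset.sum_nonneg fun _ _ => mul_self_nonneg _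
  rw [nsq, dotProduct_calD_mulVec]
  exact add_nonneg (Finset.sum_nonneg fun i _ => mul_nonneg hβ.le (hsq _))
    (mul_nonneg (inv_nonneg.2 hβ.le) (hsq _))

end Coordinates

-- Used with `s = ξ̃ − ξ̃'` and `e = ξ − ξ'`, for which `hs` is the difference of the two
-- `λ`-updates; it makes the cross terms in `Σ u_i` cancel.
theorem dotProduct_calQ_mulVec_sub_of_lamOf {p m : ℕ} {β : ℝ} (hβ : β ≠ 0)
    {s e : (Fin p ⊕ Unit) × Fin m → ℝ} (hs : lamOf s = lamOf e - β • ∑ i, uOf e i) :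
    s ⬝ᵥ calQ p m β *ᵥ (e - s) = ∑ i, uOf s i ⬝ᵥ (β • (uOf e i - uOf s i) + lamOf e) := by
  set U := ∑ i, uOf e i
  have hU : lamOf (e - s) = β • U := by rw [lamOf_sub, hs]; abel
  rw [dotProduct_calQ_mulVec, hU, hs]
  simp only [uOf_sub, dotProduct_sub, sub_dotProduct, dotProduct_add, dotProduct_smul,
    smul_dotProduct, smul_eq_mul, Finset.sum_add_distrib, Finset.sum_sub_distrib,
    ← Finset.mul_sum, ← dotProduct_sum, ← sum_dotProduct]
  rw [show ∑ i, uOf e i = U from rfl, dotProduct_comm U (∑ i, uOf s i),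
    dotProduct_comm (lamOf e) (∑ i, uOf s i)]
  field_simp
  ring

open Filter Topology in
theorem nonneg_of_forall_Ioo_nonneg_add_mul {c K : ℝ}
    (h : ∀ t ∈ Set.Ioo (0 : ℝ) 1, 0 ≤ c + t * K) : 0 ≤ c := by
  have hlim : Tendsto (fun t => c + t * K) (𝓝[>] 0) (𝓝 c) := by
    have hcont : Continuous fun t : ℝ => c + t * K := by fun_prop
    simpa using (hcont.tendsto 0).mono_left nhdsWithin_le_nhds
  exact ge_of_tendsto hlim (Filter.mem_of_superset (Ioo_mem_nhdsGT one_pos) h)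

theorem variationalInequality_of_isMinOn {ι κ : Type*} [Fintype ι] [Fintype κ]
    {θ : (ι → ℝ) → ℝ} (hθ : ConvexOn ℝ Set.univ θ) {X : Set (ι → ℝ)} (hX : Convex ℝ X)
    (A : Matrix κ ι ℝ) (l u : κ → ℝ) (β : ℝ) {x y : ι → ℝ} (hx : x ∈ X) (hy : y ∈ X)
    (hmin : IsMinOn (fun z => θ z - l ⬝ᵥ A *ᵥ z + β / 2 * ((A *ᵥ z - u) ⬝ᵥ (A *ᵥ z - u))) X x) :
    0 ≤ θ y - θ x + (A *ᵥ y - A *ᵥ x) ⬝ᵥ (β • (A *ᵥ x - u) - l) := by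
  set d := A *ᵥ y - A *ᵥ x
  apply nonneg_of_forall_Ioo_nonneg_add_mul (K := β / 2 * (d ⬝ᵥ d))
  rintro t ⟨ht0, ht1⟩
  have ht : 0 ≤ 1 - t := by linarith
  have hθz := hθ.2 (Set.mem_univ x) (Set.mem_univ y) ht ht0.le (sub_add_cancel 1 t)
  have hAz : A *ᵥ ((1 - t) • x + t • y) = A *ᵥ x + t • d := by
    simp only [d, Matrix.mulVec_add, Matrix.mulVec_smul]
    module
  have hmz := isMinOn_iff.1 hmin _ (hX hx hy ht ht0.le (sub_add_cancel 1 t))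
  simp only [hAz, smul_eq_mul] at hmz hθz
  rw [show A *ᵥ x + t • d - u = (A *ᵥ x - u) + t • d by abel] at hmz
  simp only [dotProduct_add, add_dotProduct, dotProduct_smul, smul_dotProduct, smul_eq_mul,
    dotProduct_sub, sub_dotProduct, dotProduct_comm d] at hmz ⊢
  refine nonneg_of_mul_nonneg_right ?_ ht0
  nlinarith

theorem dotProduct_nonneg_of_isMinOn_of_isMinOn {ι κ : Type*} [Fintype ι] [Fintype κ]
    {θ : (ι → ℝ) → ℝ} (hθ : ConvexOn ℝ Set.univ θ) {X : Set (ι → ℝ)} (hX : Convex ℝ X)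
    (A : Matrix κ ι ℝ) (l l' u u' : κ → ℝ) (β : ℝ) {x x' : ι → ℝ} (hx : x ∈ X) (hx' : x' ∈ X)
    (hmin : IsMinOn (fun z => θ z - l ⬝ᵥ A *ᵥ z + β / 2 * ((A *ᵥ z - u) ⬝ᵥ (A *ᵥ z - u))) X x)
    (hmin' :
      IsMinOn (fun z => θ z - l' ⬝ᵥ A *ᵥ z + β / 2 * ((A *ᵥ z - u') ⬝ᵥ (A *ᵥ z - u'))) X x') :
    0 ≤ (A *ᵥ x - A *ᵥ x') ⬝ᵥ (β • ((u - u') - (A *ᵥ x - A *ᵥ x')) + (l - l')) := by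
  have h := variationalInequality_of_isMinOn hθ hX A l u β hx hx' hmin
  have h' := variationalInequality_of_isMinOn hθ hX A l' u' β hx' hx hmin'
  simp only [dotProduct_add, dotProduct_sub, sub_dotProduct, dotProduct_smul,
    smul_eq_mul] at h h' ⊢
  linarith

section ALM

variable {p m : ℕ} {n : Fin p → ℕ} {β : ℝ} {θ : (i : Fin p) → (Fin (n i) → ℝ) → ℝ}
  {X : (i : Fin p) → Set (Fin (n i) → ℝ)} {A : (i : Fin p) → Matrix (Fin m) (Fin (n i)) ℝ}
  {b : Fin m → ℝ} {ξ ξ' : (Fin p ⊕ Unit) × Fin m → ℝ}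
  {wt wt' : ((i : Fin p) → Fin (n i) → ℝ) × (Fin m → ℝ)}

theorem ALMStep.lamOf_Pmap_sub (h : ALMStep β θ X A b ξ wt) (h' : ALMStep β θ X A b ξ' wt') :
    lamOf (Pmap A wt - Pmap A wt') = lamOf (ξ - ξ') - β • ∑ i, uOf (ξ - ξ') i := by
  simp only [lamOf_sub, lamOf_Pmap, uOf_sub, h.2, h'.2, Finset.sum_sub_distrib]
  module

theorem ALMStep.dotProduct_calQ_mulVec_nonneg (hθ : ∀ i, ConvexOn ℝ Set.univ (θ i))
    (hX : ∀ i, Convex ℝ (X i)) (hβ : β ≠ 0) (h : ALMStep β θ X A b ξ wt)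
    (h' : ALMStep β θ X A b ξ' wt') :
    0 ≤ (Pmap A wt - Pmap A wt') ⬝ᵥ
      calQ p m β *ᵥ ((ξ - Pmap A wt) - (ξ' - Pmap A wt')) := by
  rw [show (ξ - Pmap A wt) - (ξ' - Pmap A wt') = (ξ - ξ') - (Pmap A wt - Pmap A wt') by abel,
    dotProduct_calQ_mulVec_sub_of_lamOf hβ (h.lamOf_Pmap_sub h')]
  refine Finset.sum_nonneg fun i _ => ?_
  simp only [uOf_sub, uOf_Pmap, lamOf_sub]
  exact dotProduct_nonneg_of_isMinOn_of_isMinOn (hθ i) (hX i) (A i) _ _ _ _ β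
    (h.1 i).1 (h'.1 i).1 (isMinOn_iff.2 (h.1 i).2) (isMinOn_iff.2 (h'.1 i).2)

end ALM

theorem stmt16_general {p m : ℕ} {n : Fin p → ℕ}
    (θ : (i : Fin p) → (Fin (n i) → ℝ) → ℝ) (hθ : ∀ i, ConvexOn ℝ Set.univ (θ i))
    (X : (i : Fin p) → Set (Fin (n i) → ℝ))
    (hXconv : ∀ i, Convex ℝ (X i))
    (A : (i : Fin p) → Matrix (Fin m) (Fin (n i)) ℝ) (b : Fin m → ℝ)
    {β : ℝ} (hβ : 0 < β) {α : ℝ} (hα : α ∈ Set.Ioo (0 : ℝ) 2)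
    (ξ : ℕ → ((Fin p ⊕ Unit) × Fin m → ℝ))
    (wt : ℕ → ((i : Fin p) → Fin (n i) → ℝ) × (Fin m → ℝ))
    (hstep : ∀ k, ALMStep β θ X A b (ξ k) (wt k))
    (hrel : ∀ k, ξ (k + 1) = ξ k - α • (calM p m β).mulVec (ξ k - Pmap A (wt k))) :
    ∀ k : ℕ,
      nsq (calH p m β) (ξ (k + 1) - ξ (k + 2)) ≤ nsq (calH p m β) (ξ k - ξ (k + 1)) ∧
      nsq (calH p m β) (ξ k - ξ (k + 1)) - nsq (calH p m β) (ξ (k + 1) - ξ (k + 2)) ≥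
        α * (2 - α) *
          nsq (calD p m β)
            ((ξ k - Pmap A (wt k)) - (ξ (k + 1) - Pmap A (wt (k + 1)))) := by
  intro k
  set a := ξ k - Pmap A (wt k)
  set c := a - (ξ (k + 1) - Pmap A (wt (k + 1)))
  have hMa : ξ k - ξ (k + 1) = α • calM p m β *ᵥ a := by rw [hrel k]; abel
  have hMb : ξ (k + 1) - ξ (k + 2) = α • calM p m β *ᵥ (a - c) := by
    rw [sub_sub_cancel, hrel (k + 1), sub_sub_cancel]
  have hkey : 0 ≤ (α • calM p m β *ᵥ a - c) ⬝ᵥ calQ p m β *ᵥ c := by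
    rw [← hMa, show ξ k - ξ (k + 1) - c = Pmap A (wt k) - Pmap A (wt (k + 1)) by
      simp only [a, c]; abel]
    exact (hstep k).dotProduct_calQ_mulVec_nonneg hθ hXconv hβ.ne' (hstep (k + 1))
  have hdescent := relaxation_descent calH_transpose (calH_mul_calM hβ.ne')
    (calM_transpose_mul_calQ hβ.ne') calQ_add_transpose hα.1 a c hkey
  have hgap := mul_nonneg (mul_nonneg hα.1.le (sub_nonneg.2 hα.2.le)) (nsq_calD_nonneg hβ c)
  unfold nsq at hgap ⊢
  rw [hMa, hMb]
  constructor <;> linarith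

/-- Monotonicity of `‖ξ^k − ξ^{k+1}‖²_ℋ`: for iterates of the parallel splitting ALM step
followed by the relaxation step `ξ^{k+1} = ξ^k − αℳ(ξ^k − ξ̃^k)` with `α ∈ (0,2)`, one has
`‖ξ^{k+1} − ξ^{k+2}‖²_ℋ ≤ ‖ξ^k − ξ^{k+1}‖²_ℋ`, and moreover the decrease is at least
`α(2−α)‖(ξ^k − ξ̃^k) − (ξ^{k+1} − ξ̃^{k+1})‖²_𝒟`. -/
theorem stmt16 {p m : ℕ} {n : Fin p → ℕ} (hp : 1 ≤ p)
    (θ : (i : Fin p) → (Fin (n i) → ℝ) → ℝ) (hθ : ∀ i, ConvexOn ℝ Set.univ (θ i))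
    (X : (i : Fin p) → Set (Fin (n i) → ℝ))
    (hXconv : ∀ i, Convex ℝ (X i)) (hXclosed : ∀ i, IsClosed (X i))
    (hXne : ∀ i, (X i).Nonempty)
    (A : (i : Fin p) → Matrix (Fin m) (Fin (n i)) ℝ) (b : Fin m → ℝ)
    {β : ℝ} (hβ : 0 < β) {α : ℝ} (hα : α ∈ Set.Ioo (0 : ℝ) 2)
    (ξ : ℕ → ((Fin p ⊕ Unit) × Fin m → ℝ))
    (wt : ℕ → ((i : Fin p) → Fin (n i) → ℝ) × (Fin m → ℝ))
    (hstep : ∀ k, ALMStep β θ X A b (ξ k) (wt k))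
    (hrel : ∀ k, ξ (k + 1) = ξ k - α • (calM p m β).mulVec (ξ k - Pmap A (wt k))) :
    ∀ k : ℕ,
      nsq (calH p m β) (ξ (k + 1) - ξ (k + 2)) ≤ nsq (calH p m β) (ξ k - ξ (k + 1)) ∧
      nsq (calH p m β) (ξ k - ξ (k + 1)) - nsq (calH p m β) (ξ (k + 1) - ξ (k + 2)) ≥
        α * (2 - α) *
          nsq (calD p m β)
            ((ξ k - Pmap A (wt k)) - (ξ (k + 1) - Pmap A (wt (k + 1)))) :=
  stmt16_general θ hθ X hXconv A b hβ hα ξ wt hstep hrel
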